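/- Let D be an invertible multiplication operator on L^p(X,μ), 1 ≤ p < ∞ (i.e., D and D⁻¹ are both multiplication by L^∞ functions), and let A be a bounded operator on L^p(X,μ). Then ‖A‖² ≤ ‖DA‖·‖D⁻¹A‖. -/

import Mathlib

open MeasureTheory ENNReal

/-!
Pointwise, `|g|² = |d g| · |d⁻¹ g|` wherever `d ≠ 0`. Hölder's inequality with exponents
`p, p` and `p / 2` turns this into `‖g‖_p² ≤ ‖D g‖_p ‖D⁻¹ g‖_p`, and applying it to `g = A f`
bounds `‖A f‖` by `√(‖DA‖ ‖D⁻¹A‖) ‖f‖`.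
-/

lemma ENNReal.holderTriple_self_div_two (p : ℝ≥0∞) : HolderTriple p p (p / 2) where
  inv_add_inv_eq_inv := by
    rw [ENNReal.inv_div (.inl ofNat_ne_top) (.inl two_ne_zero), div_eq_mul_inv, two_mul]

namespace MeasureTheory

variable {α E F G : Type*} [MeasurableSpace α] {μ : Measure α}
  [NormedAddCommGroup E] [NormedAddCommGroup F] [NormedAddCommGroup G]

theorem eLpNorm_sq_le_mul_of_ae_sq_norm_le {f : α → E} {g : α → F} {h : α → G}
    (hf : AEStronglyMeasurable f μ) (hg : AEStronglyMeasurable g μ)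
    (hfg : ∀ᵐ x ∂μ, ‖h x‖ ^ 2 ≤ ‖f x‖ * ‖g x‖) (p : ℝ≥0∞) :
    eLpNorm h p μ ^ 2 ≤ eLpNorm f p μ * eLpNorm g p μ := by
  have := ENNReal.holderTriple_self_div_two p
  calc eLpNorm h p μ ^ 2 = eLpNorm (fun x => ‖h x‖ ^ (2 : ℝ)) (p / 2) μ := by
        rw [eLpNorm_norm_rpow h two_pos, ENNReal.ofReal_ofNat,
          ENNReal.div_mul_cancel two_ne_zero ofNat_ne_top, ENNReal.rpow_two]
    _ ≤ eLpNorm (fun x => ‖f x‖ * ‖g x‖) (p / 2) μ := by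
        refine eLpNorm_mono_ae_real ?_
        filter_upwards [hfg] with x hx
        simpa [Real.rpow_two] using hx
    _ ≤ eLpNorm f p μ * eLpNorm g p μ := by
        simpa using eLpNorm_le_eLpNorm_mul_eLpNorm'_of_norm hf hg (fun a b => ‖a‖ * ‖b‖) 1
          (.of_forall fun x => by simp)

theorem Lp.norm_sq_le_mul_of_ae_sq_norm_le {p : ℝ≥0∞} (f : Lp E p μ) (g : Lp F p μ)
    (h : Lp G p μ)
    (hfg : ∀ᵐ x ∂μ, ‖h x‖ ^ 2 ≤ ‖f x‖ * ‖g x‖) : ‖h‖ ^ 2 ≤ ‖f‖ * ‖g‖ := by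
  simp only [Lp.norm_def, ← ENNReal.toReal_pow, ← ENNReal.toReal_mul]
  exact ENNReal.toReal_mono (ENNReal.mul_ne_top (Lp.eLpNorm_ne_top f) (Lp.eLpNorm_ne_top g))
    (eLpNorm_sq_le_mul_of_ae_sq_norm_le (Lp.aestronglyMeasurable f)
      (Lp.aestronglyMeasurable g) hfg p)

end MeasureTheory

namespace ContinuousLinearMap

variable {𝕜 E F G H : Type*} [NontriviallyNormedField 𝕜]
  [SeminormedAddCommGroup E] [SeminormedAddCommGroup F] [SeminormedAddCommGroup G]
  [SeminormedAddCommGroup H] [NormedSpace 𝕜 E] [NormedSpace 𝕜 F] [NormedSpace 𝕜 G]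
  [NormedSpace 𝕜 H]

theorem opNorm_sq_le_mul {A : E →L[𝕜] F} {B : E →L[𝕜] G} {C : E →L[𝕜] H}
    (h : ∀ v, ‖A v‖ ^ 2 ≤ ‖B v‖ * ‖C v‖) : ‖A‖ ^ 2 ≤ ‖B‖ * ‖C‖ := by
  have hBC : 0 ≤ ‖B‖ * ‖C‖ := by positivity
  suffices ‖A‖ ≤ √(‖B‖ * ‖C‖) from
    (pow_le_pow_left₀ (norm_nonneg A) this 2).trans_eq (Real.sq_sqrt hBC)
  refine A.opNorm_le_bound (Real.sqrt_nonneg _) fun v => ?_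
  have hv : ‖A v‖ ^ 2 ≤ (√(‖B‖ * ‖C‖) * ‖v‖) ^ 2 := calc
    ‖A v‖ ^ 2 ≤ ‖B v‖ * ‖C v‖ := h v
    _ ≤ (‖B‖ * ‖v‖) * (‖C‖ * ‖v‖) :=
        mul_le_mul (B.le_opNorm v) (C.le_opNorm v) (norm_nonneg _) (by positivity)
    _ = (√(‖B‖ * ‖C‖) * ‖v‖) ^ 2 := by rw [mul_pow, Real.sq_sqrt hBC]; ring
  exact pow_le_pow_iff_left₀ (norm_nonneg _) (by positivity) two_ne_zero |>.mp hv

end ContinuousLinearMap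

theorem sq_norm_le_norm_mul_left
    {X : Type*} [MeasurableSpace X] (μ : Measure X)
    (p : ℝ≥0∞) [Fact (1 ≤ p)]
    (D Dinv : Lp ℂ p μ →L[ℂ] Lp ℂ p μ) (d : X → ℂ)
    (hbelow : ∃ ε > (0 : ℝ), ∀ᵐ x ∂μ, ε ≤ ‖d x‖)
    (hD : ∀ f : Lp ℂ p μ, (D f : X → ℂ) =ᵐ[μ] fun x => d x * f x)
    (hDinv : ∀ f : Lp ℂ p μ, (Dinv f : X → ℂ) =ᵐ[μ] fun x => (d x)⁻¹ * f x)
    (A : Lp ℂ p μ →L[ℂ] Lp ℂ p μ) :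
    ‖A‖ ^ 2 ≤ ‖D.comp A‖ * ‖Dinv.comp A‖ := by
  obtain ⟨ε, hε, hd⟩ := hbelow
  refine ContinuousLinearMap.opNorm_sq_le_mul fun f => ?_
  refine Lp.norm_sq_le_mul_of_ae_sq_norm_le _ _ _ ?_
  filter_upwards [hD (A f), hDinv (A f), hd] with x hDx hDinvx hdx
  have hd0 : ‖d x‖ ≠ 0 := (hε.trans_le hdx).ne'
  rw [ContinuousLinearMap.comp_apply, ContinuousLinearMap.comp_apply, hDx, hDinvx, norm_mul,
    norm_mul, norm_inv]
  exact le_of_eq (by field_simp)
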